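/- arXiv:1706.00099 — 4 statements merged into one kernel-verified Lean document; each statement's English description precedes it below -/
import Mathlib

section
/- Let a, b₁₁, b₂₀ ∈ ℝ with b₁₁ ≠ 0. On the region {(x,y) ∈ ℝ² : 1 + b₁₁·y > 0}, the function Ψ(x,y) = (1/3)·( [3b₁₁·y·(2(a + b₁₁) − a·b₁₁·y) − 6(a + b₁₁)·log(b₁₁·y + 1)]/b₁₁³ + x²·(2b₂₀·x + 3) ) is a first integral of the system ẋ = -y + a·y², ẏ = x + b₂₀x² + b₁₁xy + b₁₁b₂₀x²y; that is, ∂Ψ/∂x · (-y + a·y²) + ∂Ψ/∂y · (x + b₂₀x² + b₁₁xy + b₁₁b₂₀x²y) = 0 on that region. -/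
/-!
`Ψ = (F y + G x) / 3` separates, with `G x = x² (2 b₂₀ x + 3)` and `F` the logarithmic part, and
`G'(x) / 3 = 2 x (1 + b₂₀ x)`, `F'(y) / 3 = 2 y (1 - a y) / (1 + b₁₁ y)`. The vector field factors
as `P = -y (1 - a y)`, `Q = x (1 + b₂₀ x) (1 + b₁₁ y)`, so after cancelling `1 + b₁₁ y` the two
terms of `Ψ_x P + Ψ_y Q` are opposite.
-/

open Real

theorem hasDerivAt_sq_mul_affine (c x : ℝ) :
    HasDerivAt (fun x => x ^ 2 * (2 * c * x + 3)) (6 * x * (1 + c * x)) x :=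
  ((hasDerivAt_pow 2 x).fun_mul (((hasDerivAt_id' x).const_mul (2 * c)).add_const 3)).congr_deriv
    (by push_cast; ring)

theorem hasDerivAt_log_first_integral_part {a b y : ℝ} (hb : b ≠ 0) (hy : b * y + 1 ≠ 0) :
    HasDerivAt (fun y => (3 * b * y * (2 * (a + b) - a * b * y)
        - 6 * (a + b) * log (b * y + 1)) / b ^ 3) (6 * y * (1 - a * y) / (b * y + 1)) y := by
  have hlin : HasDerivAt (fun y => b * y + 1) b y := by
    simpa using ((hasDerivAt_id' y).const_mul b).add_const 1
  have hpoly := ((hasDerivAt_id' y).const_mul (3 * b)).fun_mul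
    (((hasDerivAt_id' y).const_mul (a * b)).const_sub (2 * (a + b)))
  refine ((hpoly.fun_sub ((hlin.log hy).const_mul (6 * (a + b)))).div_const (b ^ 3)).congr_deriv ?_
  field_simp
  ring

/-- The Darboux first integral `Ψ` of the system
`ẋ = -y + a y², ẏ = x + b₂₀ x² + b₁₁ x y + b₁₁ b₂₀ x² y` on `{1 + b₁₁ y > 0}`. -/
theorem stmt_3 (a b11 b20 : ℝ) (hb : b11 ≠ 0) :
    ∀ x y : ℝ, 1 + b11 * y > 0 →
      deriv (fun x' : ℝ => (1 / 3) *
          ((3 * b11 * y * (2 * (a + b11) - a * b11 * y)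
            - 6 * (a + b11) * Real.log (b11 * y + 1)) / b11 ^ 3
          + x' ^ 2 * (2 * b20 * x' + 3))) x * (-y + a * y ^ 2)
      + deriv (fun y' : ℝ => (1 / 3) *
          ((3 * b11 * y' * (2 * (a + b11) - a * b11 * y')
            - 6 * (a + b11) * Real.log (b11 * y' + 1)) / b11 ^ 3
          + x ^ 2 * (2 * b20 * x + 3))) y
          * (x + b20 * x ^ 2 + b11 * x * y + b11 * b20 * x ^ 2 * y) = 0 := by
  intro x y hy
  have hy' : b11 * y + 1 ≠ 0 := by linarith
  rw [(((hasDerivAt_sq_mul_affine b20 x).const_add _).const_mul (1 / 3)).deriv,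
    (((hasDerivAt_log_first_integral_part hb hy').add_const _).const_mul (1 / 3)).deriv]
  have hcancel : 6 * y * (1 - a * y) / (b11 * y + 1) * (b11 * y + 1) = 6 * y * (1 - a * y) :=
    div_mul_cancel₀ _ hy'
  linear_combination (1 / 3 * x * (1 + b20 * x)) * hcancel
end

section
/- Let b ∈ ℂ and consider the complex polynomials P(x,y) = -y + (i·b/√6)·y² and Q(x,y) = x + b·x² + (5i·b/√6)·x·y − (5b/3)·y². Then the polynomial f(x,y) = 1 + (b²/3)·x² − (b²/18)·y² + (4b/3)·x + (i/3)·√(2/3)·b²·x·y + i·√(2/3)·b·y satisfies ∂f/∂x · P + ∂f/∂y · Q = K·f identically, where K(x,y) = (i/3)·b·(√6·x + 4i·y). -/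
/-!
Write `w = i√6`. Since `1/√6 = √6/6` and `√(2/3) = √6/3`, every coefficient of `P`, `Q`, `f` and
`K` is a polynomial in `b` and `w` (the `i·4i` in `K` gives `-4`), so the Darboux identity lives in
`ℚ[b, w, x, y]` and only needs the relation `w² = -6`.
-/

open Complex

theorem deriv_eq_of_quadratic {𝕜 : Type*} [NontriviallyNormedField 𝕜] {f : 𝕜 → 𝕜} {a c : 𝕜}
    (hf : ∀ z, f z = a * z ^ 2 + c * z + f 0) (x : 𝕜) :
    deriv f x = 2 * a * x + c := by
  rw [funext hf]
  have : HasDerivAt (fun z => a * z ^ 2 + c * z + f 0) (a * (2 * x) + c) x := by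
    simpa using (((hasDerivAt_pow 2 x).const_mul a).add ((hasDerivAt_id x).const_mul c)).add_const
      (f 0)
  rw [this.deriv]
  ring

theorem darboux_identity_of_sq_eq_neg_six {K : Type*} [Field K] [CharZero K] {w : K}
    (hw : w ^ 2 = -6) (b x y : K) :
    (2 * (b ^ 2 / 3) * x + (4 * b / 3 + w / 9 * b ^ 2 * y)) * (-y + b * w / 6 * y ^ 2)
      + (2 * -(b ^ 2 / 18) * y + (w / 9 * b ^ 2 * x + w / 3 * b))
        * (x + b * x ^ 2 + 5 * b * w / 6 * x * y - 5 * b / 3 * y ^ 2)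
      = b * (w * x - 4 * y) / 3
        * (1 + b ^ 2 / 3 * x ^ 2 - b ^ 2 / 18 * y ^ 2 + 4 * b / 3 * x + w / 9 * b ^ 2 * x * y
          + w / 3 * b * y) := by
  linear_combination b ^ 2 * y * (3 * b * x ^ 2 + b * y ^ 2 + 9 * x) / 54 * hw

theorem Real.sqrt_two_div_three : √(2 / 3 : ℝ) = √6 / 3 := by
  rw [Real.sqrt_eq_iff_mul_self_eq_of_pos (by positivity)]
  ring_nf
  norm_num

theorem Real.inv_sqrt_six : (√6 : ℝ)⁻¹ = √6 / 6 := by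
  field_simp
  norm_num

theorem Complex.sq_I_mul_ofReal_sqrt_six : (I * (√6 : ℝ)) ^ 2 = -6 := by
  rw [mul_pow, I_sq, ← ofReal_pow, Real.sq_sqrt (by norm_num)]
  push_cast
  ring

open Complex in
/-- Darboux polynomial for the system from the component `V₇ᶜ`. -/
theorem stmt_4 (b : ℂ) :
    ∀ x y : ℂ,
      deriv (fun x' : ℂ => 1 + (b ^ 2 / 3) * x' ^ 2 - (b ^ 2 / 18) * y ^ 2
          + (4 * b / 3) * x' + (I / 3) * (Real.sqrt (2 / 3) : ℂ) * b ^ 2 * x' * y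
          + I * (Real.sqrt (2 / 3) : ℂ) * b * y) x
        * (-y + (I * b / (Real.sqrt 6 : ℂ)) * y ^ 2)
      + deriv (fun y' : ℂ => 1 + (b ^ 2 / 3) * x ^ 2 - (b ^ 2 / 18) * y' ^ 2
          + (4 * b / 3) * x + (I / 3) * (Real.sqrt (2 / 3) : ℂ) * b ^ 2 * x * y'
          + I * (Real.sqrt (2 / 3) : ℂ) * b * y') y
        * (x + b * x ^ 2 + (5 * I * b / (Real.sqrt 6 : ℂ)) * x * y - (5 * b / 3) * y ^ 2)
      = ((I / 3) * b * ((Real.sqrt 6 : ℂ) * x + 4 * I * y))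
        * (1 + (b ^ 2 / 3) * x ^ 2 - (b ^ 2 / 18) * y ^ 2
          + (4 * b / 3) * x + (I / 3) * (Real.sqrt (2 / 3) : ℂ) * b ^ 2 * x * y
          + I * (Real.sqrt (2 / 3) : ℂ) * b * y) := by
  intro x y
  rw [deriv_eq_of_quadratic (a := b ^ 2 / 3) (c := 4 * b / 3 + I / 3 * (√(2 / 3) : ℝ) * b ^ 2 * y)
      (fun _ => by ring),
    deriv_eq_of_quadratic (a := -(b ^ 2 / 18)) (c := I / 3 * (√(2 / 3) : ℝ) * b ^ 2 * x
      + I * (√(2 / 3) : ℝ) * b) (fun _ => by ring)]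
  simp only [Real.sqrt_two_div_three, div_eq_mul_inv (_ * b) ((√6 : ℝ) : ℂ), ← ofReal_inv,
    Real.inv_sqrt_six]
  push_cast
  have hK : I / 3 * b * ((√6 : ℝ) * x + 4 * I * y) = b * (I * (√6 : ℝ) * x - 4 * y) / 3 := by
    linear_combination 4 / 3 * b * y * I_sq
  rw [hK]
  linear_combination darboux_identity_of_sq_eq_neg_six sq_I_mul_ofReal_sqrt_six b x y
end

section
/- Let t₁, t₂, t₃ ∈ ℝ with t₂² ≠ t₃, and set a₀₂ = 0, b₂₀ = −t₂(t₂² − 2t₃)/(t₂² − t₃), b₃₀ = −t₂²t₃/(t₂² − t₃), b₁₁ = t₁, b₂₁ = t₁t₂t₃/(t₂² − t₃), b₀₂ = t₂, b₁₂ = t₃. Then the following three equations hold: b₀₂³ + b₀₂²b₂₀ − 2b₀₂b₁₂ − b₁₂b₂₀ = 0, −b₀₂b₁₁ − b₁₁b₂₀ + b₂₁ = 0, and b₀₂² + b₀₂b₂₀ + b₃₀ = 0. -/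
/-- The rational map parametrizes the component `V₅` of the center variety. -/
theorem stmt_8 (t1 t2 t3 : ℝ) (h : t2 ^ 2 ≠ t3)
    (a02 b20 b30 b11 b21 b02 b12 : ℝ)
    (ha : a02 = 0)
    (hb20 : b20 = -(t2 * (t2 ^ 2 - 2 * t3)) / (t2 ^ 2 - t3))
    (hb30 : b30 = -(t2 ^ 2 * t3) / (t2 ^ 2 - t3))
    (hb11 : b11 = t1)
    (hb21 : b21 = t1 * t2 * t3 / (t2 ^ 2 - t3))
    (hb02 : b02 = t2)
    (hb12 : b12 = t3) :
    b02 ^ 3 + b02 ^ 2 * b20 - 2 * b02 * b12 - b12 * b20 = 0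
    ∧ -(b02 * b11) - b11 * b20 + b21 = 0
    ∧ b02 ^ 2 + b02 * b20 + b30 = 0 := by
  have hd : t2 ^ 2 - t3 ≠ 0 := sub_ne_zero.mpr h
  subst ha hb20 hb30 hb11 hb21 hb02 hb12
  refine ⟨?_, ?_, ?_⟩ <;> field_simp <;> ring
end

section
/- Let t₁, t₂ ∈ ℝ with t₁² ≠ 4t₂², and set a₀₂ = −t₁(t₁² + 4t₂²)/(2(t₁ − 2t₂)(t₁ + 2t₂)), b₂₀ = 2t₁²t₂/(4t₂² − t₁²), b₁₁ = t₁, b₀₂ = t₂, b₃₀ = b₂₁ = b₁₂ = 0. Then all of the following hold: −2b₀₂b₁₁² + 4b₀₂²b₂₀ − b₁₁²b₂₀ = 0, 2a₀₂b₁₁ + b₁₁² − 4b₀₂b₂₀ = 0, 2a₀₂b₀₂ − b₀₂b₁₁ − b₁₁b₂₀ = 0, and 4a₀₂² − b₁₁² − 4b₂₀² = 0. -/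
theorem stmt_9_general (t1 t2 : ℝ) (h : t1 ^ 2 ≠ 4 * t2 ^ 2)
    (a02 b20 b11 b02 : ℝ)
    (ha : a02 = -(t1 * (t1 ^ 2 + 4 * t2 ^ 2)) / (2 * (t1 - 2 * t2) * (t1 + 2 * t2)))
    (hb20 : b20 = 2 * t1 ^ 2 * t2 / (4 * t2 ^ 2 - t1 ^ 2))
    (hb11 : b11 = t1) (hb02 : b02 = t2) :
    -2 * b02 * b11 ^ 2 + 4 * b02 ^ 2 * b20 - b11 ^ 2 * b20 = 0
    ∧ 2 * a02 * b11 + b11 ^ 2 - 4 * b02 * b20 = 0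
    ∧ 2 * a02 * b02 - b02 * b11 - b11 * b20 = 0
    ∧ 4 * a02 ^ 2 - b11 ^ 2 - 4 * b20 ^ 2 = 0 := by
  set d := t1 ^ 2 - 4 * t2 ^ 2 with hd
  have hd0 : d ≠ 0 := sub_ne_zero.mpr h
  have ha' : a02 = -(t1 * (t1 ^ 2 + 4 * t2 ^ 2)) / (2 * d) := by
    rw [ha, hd]
    ring
  have hb20' : b20 = -(2 * t1 ^ 2 * t2) / d := by
    rw [hb20, hd, neg_div, ← div_neg, neg_sub]
  rw [ha', hb20', hb11, hb02]
  refine ⟨?_, ?_, ?_, ?_⟩ <;> field_simp <;> ring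

/-- The rational map parametrizes the component `V₃` of the center variety. -/
theorem stmt_9 (t1 t2 : ℝ) (h : t1 ^ 2 ≠ 4 * t2 ^ 2)
    (a02 b20 b30 b11 b21 b02 b12 : ℝ)
    (ha : a02 = -(t1 * (t1 ^ 2 + 4 * t2 ^ 2)) / (2 * (t1 - 2 * t2) * (t1 + 2 * t2)))
    (hb20 : b20 = 2 * t1 ^ 2 * t2 / (4 * t2 ^ 2 - t1 ^ 2))
    (hb11 : b11 = t1) (hb02 : b02 = t2)
    (hb30 : b30 = 0) (hb21 : b21 = 0) (hb12 : b12 = 0) :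
    -2 * b02 * b11 ^ 2 + 4 * b02 ^ 2 * b20 - b11 ^ 2 * b20 = 0
    ∧ 2 * a02 * b11 + b11 ^ 2 - 4 * b02 * b20 = 0
    ∧ 2 * a02 * b02 - b02 * b11 - b11 * b20 = 0
    ∧ 4 * a02 ^ 2 - b11 ^ 2 - 4 * b20 ^ 2 = 0 :=
  stmt_9_general t1 t2 h a02 b20 b11 b02 ha hb20 hb11 hb02
end
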